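/- arXiv:1610.06816 — 5 statements merged into one kernel-verified Lean document; each statement's English description precedes it below -/
import Mathlib

section
/- Fix a partition λ and a real number q > 1. Then the limit as n → ∞ of q^{-(n²-n)} · Σ_{μ a partition of n} N_A(n,q,μ) · binom(μ,λ) exists and equals (1/z_λ) · ∏_{r≥1} (q^r/(q^r-1))^{n_r(λ)}. (For q a prime power this is the stable mean of the polynomial statistic (X choose λ) over the q^{n²-n} F-stable maximal tori of GL_n over the algebraic closure of F_q.) -/
open Finset Filter

/-- `z_μ = ∏_{r≥1} n_r(μ)! · r^{n_r(μ)}`, where `n_r(μ)` is the number of parts of `μ`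
equal to `r`.  Here a partition is encoded by its multiset of parts. -/
def zOf (mu : Multiset ℕ) : ℕ :=
  ∏ r ∈ mu.toFinset, Nat.factorial (mu.count r) * r ^ (mu.count r)

/-- `binom(ν,μ) = ∏_{r≥1} C(n_r(ν), n_r(μ))`, the value of the character polynomial
`(X choose μ)` on a permutation of cycle type `ν`. -/
def binomOf (nu mu : Multiset ℕ) : ℕ :=
  ∏ r ∈ mu.toFinset, Nat.choose (nu.count r) (mu.count r)

/-- `|GL_n(F_q)| = q^{n(n-1)/2} ∏_{i=1}^n (q^i - 1)`, for a real parameter `q`. -/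
noncomputable def GLcard (q : ℝ) (n : ℕ) : ℝ :=
  q ^ (n * (n - 1) / 2) * ∏ i ∈ Finset.Icc 1 n, (q ^ i - 1)

/-- `N_A(n,q,μ) = |GL_n(F_q)| / (z_μ ∏_{r≥1} (q^r-1)^{n_r(μ)})`, the Springer–Steinberg
count of F-stable maximal tori of `GL_n` of type `μ`, taken as a definition for real `q`. -/
noncomputable def NA (q : ℝ) (n : ℕ) (mu : Nat.Partition n) : ℝ :=
  GLcard q n /
    ((zOf mu.parts : ℝ) * ∏ r ∈ mu.parts.toFinset, (q ^ r - 1) ^ (mu.parts.count r))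


/-!
Write `W(μ) = (z_μ ∏_r (q^r - 1)^{n_r(μ)})⁻¹`, so that `N_A(n,q,μ) = |GL_n(F_q)| W(μ)`.
Since `binom(ν + λ, λ) W(ν + λ) = W(λ) W(ν)`, the sum equals `|GL_n(F_q)| W(λ) T(n - |λ|)`
with `T(m) = ∑_{ν ⊢ m} W(ν)`. Counting the parts of each `ν` gives the recursion
`m T(m) = ∑_{r=1}^m T(m - r) / (q^r - 1)`, which is also satisfied by `x^m / (x; x)_m`
for `x = q⁻¹`; hence `T(m) = x^m / (x; x)_m`, i.e. Steinberg's count `q^{m²-m}` divided by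
`|GL_m(F_q)|`. As `|GL_n(F_q)| = q^{n²} (x; x)_n`, the normalised sum is
`q^{|λ|} W(λ) ∏_{i=1}^{|λ|} (1 - x^{n - |λ| + i})`, which tends to `q^{|λ|} W(λ)`,
the claimed limit.
-/

open scoped Nat

namespace Nat.Partition

lemma sum_Icc_count_mul {m : ℕ} (μ : Nat.Partition m) :
    ∑ r ∈ Icc 1 m, μ.parts.count r * r = m := by
  have hsub : μ.parts.toFinset ⊆ Icc 1 m := fun r hr => by
    rw [Multiset.mem_toFinset] at hr
    exact mem_Icc.2 ⟨μ.parts_pos hr, μ.parts_sum ▸ Multiset.le_sum_of_mem hr⟩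
  conv_rhs => rw [← μ.parts_sum, sum_multiset_count]
  refine (sum_subset hsub fun r _ hr => ?_).symm
  simp [Multiset.count_eq_zero.2 (by simpa using hr)]

lemma sum_filter_le_parts {M : Type*} [AddCommMonoid M] {L n : ℕ} (lam : Nat.Partition L)
    (h : L ≤ n) (F : Multiset ℕ → M) :
    ∑ μ : Nat.Partition n with lam.parts ≤ μ.parts, F μ.parts =
      ∑ ν : Nat.Partition (n - L), F (ν.parts + lam.parts) := by
  symm
  refine sum_bij' (fun ν _ => ⟨ν.parts + lam.parts, ?_, ?_⟩)
    (fun μ hμ => ⟨μ.parts - lam.parts, ?_, ?_⟩) ?_ ?_ ?_ ?_ ?_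
  · intro i hi
    rcases Multiset.mem_add.1 hi with h | h
    exacts [ν.parts_pos h, lam.parts_pos h]
  · rw [Multiset.sum_add, ν.parts_sum, lam.parts_sum]; omega
  · exact fun hi => μ.parts_pos (Multiset.mem_of_le tsub_le_self hi)
  · have := congrArg Multiset.sum (tsub_add_cancel_of_le (mem_filter.1 hμ).2)
    rw [Multiset.sum_add, lam.parts_sum, μ.parts_sum] at this
    omega
  · simp
  · simp
  · exact fun ν _ => Nat.Partition.ext (by simp)
  · exact fun μ hμ => Nat.Partition.ext (tsub_add_cancel_of_le (mem_filter.1 hμ).2)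
  · simp

end Nat.Partition

lemma le_of_binomOf_ne_zero {μ lam : Multiset ℕ} (h : binomOf μ lam ≠ 0) : lam ≤ μ := by
  refine Multiset.le_iff_count.2 fun r => ?_
  by_cases hr : r ∈ lam
  · by_contra hlt
    exact h (prod_eq_zero (Multiset.mem_toFinset.2 hr) (Nat.choose_eq_zero_of_lt (not_le.1 hlt)))
  · simp [Multiset.count_eq_zero.2 hr]

lemma sum_Icc_sub_eq_sum_range {M : Type*} [AddCommMonoid M] (f : ℕ → M) (m : ℕ) :
    ∑ r ∈ Icc 1 m, f (m - r) = ∑ k ∈ range m, f k := by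
  rw [← Ico_add_one_right_eq_Icc, sum_Ico_reflect f 1 le_rfl]
  simp

lemma eq_of_natCast_mul_eq_sum_Icc {K : Type*} [Field K] [CharZero K] {a b : ℕ → K} (w : ℕ → K)
    (h0 : a 0 = b 0)
    (ha : ∀ m : ℕ, (m : K) * a m = ∑ r ∈ Icc 1 m, w r * a (m - r))
    (hb : ∀ m : ℕ, (m : K) * b m = ∑ r ∈ Icc 1 m, w r * b (m - r)) : a = b := by
  funext m
  induction m using Nat.strong_induction_on with
  | _ m ih =>
    rcases Nat.eq_zero_or_pos m with rfl | hm
    · exact h0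
    refine mul_left_cancel₀ (Nat.cast_ne_zero.2 hm.ne' : (m : K) ≠ 0) ?_
    rw [ha, hb]
    exact sum_congr rfl fun r hr => by rw [ih _ (by have := (mem_Icc.1 hr).1; omega)]

section TorusWeight

variable {K : Type*} [Field K]

def partFactor (q : K) (r k : ℕ) : K := (k ! : K) * (r : K) ^ k * (q ^ r - 1) ^ k

def torusWeight (q : K) (μ : Multiset ℕ) : K :=
  ((zOf μ : K) * ∏ r ∈ μ.toFinset, (q ^ r - 1) ^ μ.count r)⁻¹

def torusWeightSum (q : K) (m : ℕ) : K := ∑ ν : Nat.Partition m, torusWeight q ν.parts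

lemma torusWeight_eq_prod_of_subset (q : K) {μ : Multiset ℕ} {s : Finset ℕ}
    (hs : μ.toFinset ⊆ s) : torusWeight q μ = ∏ r ∈ s, (partFactor q r (μ.count r))⁻¹ := by
  rw [torusWeight, zOf, Nat.cast_prod, ← prod_mul_distrib, ← prod_inv_distrib]
  refine (prod_congr rfl fun r _ => ?_).trans (prod_subset hs fun r _ hr => ?_)
  · simp [partFactor]
  · simp [Multiset.count_eq_zero.2 (by simpa using hr), partFactor]

lemma choose_mul_partFactor_mul_partFactor (q : K) (r a b : ℕ) :
    ((a + b).choose b : K) * partFactor q r a * partFactor q r b = partFactor q r (a + b) := by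
  simp only [partFactor, ← Nat.add_choose_mul_factorial_mul_factorial a b]
  push_cast
  ring

lemma binomOf_add_mul_torusWeight [CharZero K] (q : K) (ν lam : Multiset ℕ) :
    (binomOf (ν + lam) lam : K) * torusWeight q (ν + lam) =
      torusWeight q lam * torusWeight q ν := by
  set s := (ν + lam).toFinset
  have hbinom : (binomOf (ν + lam) lam : K) =
      ∏ r ∈ s, (((ν + lam).count r).choose (lam.count r) : K) := by
    rw [binomOf, Nat.cast_prod]
    refine prod_subset (by simp [s]) fun r _ hr => ?_
    simp [Multiset.count_eq_zero.2 (by simpa using hr)]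
  rw [hbinom, torusWeight_eq_prod_of_subset q (subset_refl s),
    torusWeight_eq_prod_of_subset q (by simp [s] : lam.toFinset ⊆ s),
    torusWeight_eq_prod_of_subset q (by simp [s] : ν.toFinset ⊆ s),
    ← prod_mul_distrib, ← prod_mul_distrib]
  refine prod_congr rfl fun r _ => ?_
  have hchoose : ((ν.count r + lam.count r).choose (lam.count r) : K) ≠ 0 :=
    Nat.cast_ne_zero.2 (Nat.choose_pos (Nat.le_add_left _ _)).ne'
  rw [Multiset.count_add, ← choose_mul_partFactor_mul_partFactor, mul_assoc, mul_inv, mul_inv,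
    ← mul_assoc, mul_inv_cancel₀ hchoose, one_mul, mul_comm]

lemma sum_binomOf_mul_torusWeight [CharZero K] (q : K) {L n : ℕ} (lam : Nat.Partition L)
    (h : L ≤ n) :
    ∑ μ : Nat.Partition n, (binomOf μ.parts lam.parts : K) * torusWeight q μ.parts =
      torusWeight q lam.parts * torusWeightSum q (n - L) := by
  rw [← sum_filter_of_ne fun μ _ hμ =>
      le_of_binomOf_ne_zero (by simpa using left_ne_zero_of_mul hμ),
    Nat.Partition.sum_filter_le_parts lam h (fun μ => (binomOf μ lam.parts : K) * torusWeight q μ),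
    torusWeightSum, mul_sum]
  simp_rw [binomOf_add_mul_torusWeight]

lemma binomOf_singleton (μ : Multiset ℕ) (r : ℕ) : binomOf μ {r} = μ.count r := by
  simp [binomOf]

lemma torusWeight_singleton (q : K) (r : ℕ) : torusWeight q {r} = ((r : K) * (q ^ r - 1))⁻¹ := by
  simp [torusWeight, zOf]

lemma torusWeightSum_zero (q : K) : torusWeightSum q 0 = 1 := by
  simp [torusWeightSum, torusWeight, zOf]

lemma natCast_mul_torusWeightSum [CharZero K] (q : K) (m : ℕ) :
    (m : K) * torusWeightSum q m = ∑ r ∈ Icc 1 m, (q ^ r - 1)⁻¹ * torusWeightSum q (m - r) := by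
  -- `n_r(μ) = binom(μ, (r))`, so `sum_binomOf_mul_torusWeight` applies with `λ = (r)`.
  calc (m : K) * torusWeightSum q m
      = ∑ r ∈ Icc 1 m, (r : K) * ∑ μ : Nat.Partition m,
          (binomOf μ.parts (Nat.Partition.indiscrete r).parts : K) * torusWeight q μ.parts := by
        simp_rw [torusWeightSum, mul_sum]
        rw [sum_comm]
        refine sum_congr rfl fun μ _ => ?_
        have hcount : ∀ r ∈ Icc 1 m, (r : K) * ((binomOf μ.parts
            (Nat.Partition.indiscrete r).parts : K) * torusWeight q μ.parts) =
            ((μ.parts.count r * r : ℕ) : K) * torusWeight q μ.parts := fun r hr => by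
          rw [Nat.Partition.indiscrete_parts (by have := (mem_Icc.1 hr).1; omega),
            binomOf_singleton]
          push_cast
          ring
        rw [sum_congr rfl hcount, ← sum_mul, ← Nat.cast_sum, Nat.Partition.sum_Icc_count_mul]
    _ = ∑ r ∈ Icc 1 m, (q ^ r - 1)⁻¹ * torusWeightSum q (m - r) := by
        refine sum_congr rfl fun r hr => ?_
        obtain ⟨hr1, hrm⟩ := mem_Icc.1 hr
        have hr0 : (r : K) ≠ 0 := Nat.cast_ne_zero.2 (by omega)
        rw [sum_binomOf_mul_torusWeight q _ hrm, Nat.Partition.indiscrete_parts (by omega),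
          torusWeight_singleton, mul_inv, ← mul_assoc, ← mul_assoc, mul_inv_cancel₀ hr0, one_mul]

lemma one_div_zOf_mul_prod_eq (q : K) (μ : Multiset ℕ) :
    1 / (zOf μ : K) * ∏ r ∈ μ.toFinset, (q ^ r / (q ^ r - 1)) ^ μ.count r =
      q ^ μ.sum * torusWeight q μ := by
  have hpow : q ^ μ.sum = ∏ r ∈ μ.toFinset, (q ^ r) ^ μ.count r := by
    simp_rw [sum_multiset_count μ, smul_eq_mul, ← prod_pow_eq_pow_sum, ← pow_mul, mul_comm]
  rw [hpow, torusWeight, mul_inv, one_div]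
  simp only [div_pow, prod_div_distrib]
  ring

end TorusWeight

section QPochhammer

variable {K : Type*} [Field K]

/-- `(x; x)_m = ∏_{i=1}^m (1 - x^i)`. -/
def qPochhammer (x : K) (m : ℕ) : K := ∏ i ∈ range m, (1 - x ^ (i + 1))

lemma qPochhammer_succ (x : K) (m : ℕ) :
    qPochhammer x (m + 1) = qPochhammer x m * (1 - x ^ (m + 1)) :=
  prod_range_succ _ _

lemma qPochhammer_add (x : K) (m L : ℕ) :
    qPochhammer x (m + L) = qPochhammer x m * ∏ i ∈ range L, (1 - x ^ (m + i + 1)) :=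
  prod_range_add _ _ _

lemma qPochhammer_ne_zero {x : K} (hx : ∀ i, x ^ (i + 1) ≠ 1) (m : ℕ) : qPochhammer x m ≠ 0 :=
  prod_ne_zero_iff.2 fun i _ => sub_ne_zero.2 (hx i).symm

lemma inv_pow_succ_ne_one {q : K} (hq : ∀ i, q ^ (i + 1) ≠ 1) (i : ℕ) : q⁻¹ ^ (i + 1) ≠ 1 := by
  rw [inv_pow]
  exact inv_ne_one.2 (hq i)

lemma sum_range_pow_div_qPochhammer {x : K} (hx : ∀ i, x ^ (i + 1) ≠ 1) (m : ℕ) :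
    ∑ k ∈ range m, x ^ (k + 1) / qPochhammer x (k + 1) = (qPochhammer x m)⁻¹ - 1 := by
  induction m with
  | zero => simp [qPochhammer]
  | succ m ih =>
    have h1 := sub_ne_zero.2 (hx m).symm
    rw [sum_range_succ, ih, qPochhammer_succ]
    field_simp
    ring

lemma inv_qPochhammer_mul_add_pow_div {x : K} (hx : ∀ i, x ^ (i + 1) ≠ 1) {k m : ℕ}
    (hkm : k < m) :
    (qPochhammer x k * (1 - x ^ (m - k)))⁻¹ + x ^ (k + 1) / qPochhammer x (k + 1) =
      (1 - x ^ (m + 1)) * (qPochhammer x (k + 1) * (1 - x ^ (m - k)))⁻¹ := by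
  obtain ⟨j, hj⟩ : ∃ j, m - k = j + 1 := ⟨m - k - 1, by omega⟩
  have hxm : x ^ (m + 1) = x ^ (k + 1) * x ^ (j + 1) := by rw [← pow_add]; congr 1; omega
  have hk1 := sub_ne_zero.2 (hx k).symm
  have hj1 := sub_ne_zero.2 (hx j).symm
  rw [hj, hxm, qPochhammer_succ]
  field_simp
  ring

lemma sum_range_inv_qPochhammer_mul {x : K} (hx : ∀ i, x ^ (i + 1) ≠ 1) (m : ℕ) :
    ∑ k ∈ range m, (qPochhammer x k * (1 - x ^ (m - k)))⁻¹ = m / qPochhammer x m := by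
  induction m with
  | zero => simp
  | succ m ih =>
    set S := ∑ k ∈ range m, (qPochhammer x (k + 1) * (1 - x ^ (m - k)))⁻¹
    have h1 := sub_ne_zero.2 (hx m).symm
    have hsplit : ∑ k ∈ range (m + 1), (qPochhammer x k * (1 - x ^ (m + 1 - k)))⁻¹ =
        S + (1 - x ^ (m + 1))⁻¹ := by
      rw [sum_range_succ']
      simp [S, qPochhammer]
    have hshift : (m + 1 : K) / qPochhammer x m = (1 - x ^ (m + 1)) * S + 1 := by
      rw [add_div, ← ih, one_div, ← sub_add_cancel (qPochhammer x m)⁻¹ 1,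
        ← sum_range_pow_div_qPochhammer hx, ← add_assoc, ← sum_add_distrib, mul_sum]
      exact congrArg (· + 1) (sum_congr rfl fun k hk =>
        inv_qPochhammer_mul_add_pow_div hx (mem_range.1 hk))
    rw [hsplit, qPochhammer_succ, Nat.cast_succ, ← div_div, hshift]
    field_simp

lemma inv_pow_sub_one_eq {q : K} (hq : q ≠ 0) (r : ℕ) :
    (q ^ r - 1)⁻¹ = q⁻¹ ^ r / (1 - q⁻¹ ^ r) := by
  rw [inv_pow, div_eq_mul_inv, ← mul_inv, mul_sub, mul_one, mul_inv_cancel₀ (pow_ne_zero r hq)]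

lemma natCast_mul_pow_div_qPochhammer {q : K} (hq : q ≠ 0) (hx : ∀ i, q⁻¹ ^ (i + 1) ≠ 1)
    (m : ℕ) : (m : K) * (q⁻¹ ^ m / qPochhammer q⁻¹ m) =
      ∑ r ∈ Icc 1 m, (q ^ r - 1)⁻¹ * (q⁻¹ ^ (m - r) / qPochhammer q⁻¹ (m - r)) := by
  have hterm : ∀ r ∈ Icc 1 m, (q ^ r - 1)⁻¹ * (q⁻¹ ^ (m - r) / qPochhammer q⁻¹ (m - r)) =
      q⁻¹ ^ m * (qPochhammer q⁻¹ (m - r) * (1 - q⁻¹ ^ (m - (m - r))))⁻¹ := fun r hr => by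
    rw [Nat.sub_sub_self (mem_Icc.1 hr).2, inv_pow_sub_one_eq hq,
      ← pow_mul_pow_sub _ (mem_Icc.1 hr).2, mul_inv]
    ring
  rw [sum_congr rfl hterm, ← mul_sum,
    sum_Icc_sub_eq_sum_range (fun k => (qPochhammer q⁻¹ k * (1 - q⁻¹ ^ (m - k)))⁻¹),
    sum_range_inv_qPochhammer_mul hx]
  ring

end QPochhammer

theorem torusWeightSum_eq_pow_div_qPochhammer {K : Type*} [Field K] [CharZero K] {q : K}
    (hq0 : q ≠ 0) (hq : ∀ i, q ^ (i + 1) ≠ 1) (m : ℕ) :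
    torusWeightSum q m = q⁻¹ ^ m / qPochhammer q⁻¹ m := by
  refine congrFun (eq_of_natCast_mul_eq_sum_Icc (fun r => (q ^ r - 1)⁻¹) ?_
    (natCast_mul_torusWeightSum q) (natCast_mul_pow_div_qPochhammer hq0 (inv_pow_succ_ne_one hq))) m
  simp [torusWeightSum_zero, qPochhammer]

lemma GLcard_eq_pow_mul_qPochhammer {q : ℝ} (hq : q ≠ 0) (n : ℕ) :
    GLcard q n = q ^ (n ^ 2) * qPochhammer q⁻¹ n := by
  induction n with
  | zero => simp [GLcard, qPochhammer]
  | succ n ih =>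
    have hsq : (n + 1) ^ 2 = n ^ 2 + n + (n + 1) := by ring
    rw [GLcard] at ih ⊢
    rw [Nat.triangle_succ, prod_Icc_succ_top (by omega), pow_add, mul_mul_mul_comm, ih,
      qPochhammer_succ, hsq, pow_add, pow_add, inv_pow]
    field_simp
    ring

lemma sum_NA_mul_binomOf (q : ℝ) {L n : ℕ} (lam : Nat.Partition L) (h : L ≤ n) :
    ∑ μ : Nat.Partition n, NA q n μ * (binomOf μ.parts lam.parts : ℝ) =
      GLcard q n * (torusWeight q lam.parts * torusWeightSum q (n - L)) := by
  rw [← sum_binomOf_mul_torusWeight q lam h, mul_sum]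
  refine sum_congr rfl fun μ _ => ?_
  rw [NA, div_eq_mul_inv, ← torusWeight]
  ring

lemma one_div_pow_mul_sum_NA_mul_binomOf {q : ℝ} (hq0 : q ≠ 0) (hq : ∀ i, q ^ (i + 1) ≠ 1)
    {L : ℕ} (lam : Nat.Partition L) (m : ℕ) :
    1 / q ^ ((m + L) ^ 2 - (m + L)) *
        ∑ μ : Nat.Partition (m + L), NA q (m + L) μ * (binomOf μ.parts lam.parts : ℝ) =
      (1 / (zOf lam.parts : ℝ) *
          ∏ r ∈ lam.parts.toFinset, (q ^ r / (q ^ r - 1)) ^ lam.parts.count r) *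
        ∏ i ∈ range L, (1 - q⁻¹ ^ (m + i + 1)) := by
  have hP := qPochhammer_ne_zero (inv_pow_succ_ne_one hq) m
  rw [sum_NA_mul_binomOf q lam (Nat.le_add_left L m), Nat.add_sub_cancel,
    GLcard_eq_pow_mul_qPochhammer hq0, torusWeightSum_eq_pow_div_qPochhammer hq0 hq,
    qPochhammer_add, one_div_zOf_mul_prod_eq, lam.parts_sum,
    ← pow_sub_mul_pow q (Nat.le_self_pow two_ne_zero (m + L)), pow_add q m L, inv_pow]
  generalize qPochhammer q⁻¹ m = P at hP ⊢
  field_simp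

/-- **Theorem 1.2(i)**: the stable mean of the polynomial statistic `(X choose λ)` over the
`q^{n²-n}` F-stable maximal tori of `GL_n(\bar F_q)` is
`(1/z_λ) ∏_{r≥1} (q^r/(q^r-1))^{n_r(λ)}`. -/
theorem stable_mean_typeA (L : ℕ) (lam : Nat.Partition L) (q : ℝ) (hq : 1 < q) :
    Tendsto
      (fun n : ℕ =>
        (1 / q ^ (n ^ 2 - n)) *
          ∑ mu : Nat.Partition n, NA q n mu * (binomOf mu.parts lam.parts : ℝ))
      atTop
      (nhds ((1 / (zOf lam.parts : ℝ)) *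
        ∏ r ∈ lam.parts.toFinset, (q ^ r / (q ^ r - 1)) ^ (lam.parts.count r))) := by
  have hq0 : q ≠ 0 := by positivity
  have hq1 : ∀ i, q ^ (i + 1) ≠ 1 := fun i => (one_lt_pow₀ hq i.succ_ne_zero).ne'
  have hprod : Tendsto (fun m : ℕ => ∏ i ∈ range L, (1 - q⁻¹ ^ (m + i + 1))) atTop (nhds 1) := by
    rw [← prod_const_one (s := range L)]
    refine tendsto_finsetProd _ fun i _ => ?_
    have := (tendsto_pow_atTop_nhds_zero_of_lt_one (by positivity) (inv_lt_one_of_one_lt₀ hq)).comp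
      (tendsto_add_atTop_nat (i + 1))
    simpa [add_assoc] using (tendsto_const_nhds (x := (1 : ℝ))).sub this
  rw [← tendsto_add_atTop_iff_nat L]
  simpa only [one_div_pow_mul_sum_NA_mul_binomOf hq0 hq1, mul_one] using hprod.const_mul _
end

section
/- Fix a double partition (μ,λ). Then in the ring ℚ[[z]][[u]] of formal power series in u with coefficients in ℚ[[z]]: Σ_{n≥0} g_n(μ,λ) u^n = (1/(v_μ v_λ)) · ∏_{r≥1} (u^r/(1-z^r))^{n_r(μ)} · ∏_{r≥1} (u^r/(1+z^r))^{n_r(λ)} · Σ_{m≥0} u^m / ∏_{i=1}^m (1-z^{2i}), where the last factor is the expansion of the infinite product ∏_{r≥1} (1-u z^{2r-2})^{-1}, and 1/(1±z^r) denotes the inverse of 1±z^r in ℚ[[z]]. -/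
open Finset PowerSeries

/-- `v_μ = ∏_{r≥1} n_r(μ)! · (2r)^{n_r(μ)}`. -/
def vOf (mu : Multiset ℕ) : ℕ :=
  ∏ r ∈ mu.toFinset, Nat.factorial (mu.count r) * (2 * r) ^ (mu.count r)

/-- `∏_{r≥1} (1-z^r)^{-n_r(ν)} ∈ ℚ[[z]]`. -/
noncomputable def facMinus (nu : Multiset ℕ) : PowerSeries ℚ :=
  ∏ r ∈ nu.toFinset, ((1 - (PowerSeries.X : PowerSeries ℚ) ^ r)⁻¹) ^ (nu.count r)

/-- `∏_{r≥1} (1+z^r)^{-n_r(κ)} ∈ ℚ[[z]]`. -/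
noncomputable def facPlus (ka : Multiset ℕ) : PowerSeries ℚ :=
  ∏ r ∈ ka.toFinset, ((1 + (PowerSeries.X : PowerSeries ℚ) ^ r)⁻¹) ^ (ka.count r)

/-- `g_n(μ,λ) = Σ_{(ν,κ) ⊢ n} binom(ν,μ)binom(κ,λ)/(v_ν v_κ) ·
∏ (1-z^r)^{-n_r(ν)} (1+z^r)^{-n_r(κ)} ∈ ℚ[[z]]`; the sum over double partitions of `n`
is realized as a sum over `k ≤ n`, `ν ⊢ k`, `κ ⊢ n - k`. -/
noncomputable def gSer (muP lamP : Multiset ℕ) (n : ℕ) : PowerSeries ℚ :=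
  ∑ k ∈ Finset.range (n + 1), ∑ nu : Nat.Partition k, ∑ ka : Nat.Partition (n - k),
    PowerSeries.C (R := ℚ)
        (((binomOf nu.parts muP : ℚ) * (binomOf ka.parts lamP : ℚ)) /
          ((vOf nu.parts : ℚ) * (vOf ka.parts : ℚ))) *
      facMinus nu.parts * facPlus ka.parts

/-!
For `ν = μ + ρ` one has `binom(ν, μ) / v_ν = 1 / (v_μ v_ρ)`, so the part of `g_n` indexed by `ν ⊇ μ`
factors as `u^{|μ|} / v_μ · ∏ (1 - z^r)^{-n_r(μ)}` times the exponential series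
`exp (∑_r u^r / (2r (1 - z^r)))`, and likewise for `κ ⊇ λ` with `1 + z^r`. The two exponentials
multiply to `E(u) = exp (∑_r u^r / (r (1 - z^{2r})))`. Splitting the exponent as
`∑_r u^r / r + ∑_r (z² u)^r / (r (1 - z^{2r}))` gives `(1 - u) E(u) = E(z² u)`, i.e.
`(1 - z^{2m}) e_m = e_{m-1}` for the coefficients, whence `e_m = ∏_{i ≤ m} (1 - z^{2i})⁻¹`.
Exponentials are handled through the differential equation `u E' = (∑_r r f_r u^r) E`, which
determines `E` from its constant term.
-/

open scoped Nat

@[to_additive]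
lemma prod_toFinset_count_of_subset {α M : Type*} [DecidableEq α] [CommMonoid M]
    {s : Multiset α} {t : Finset α} (h : s.toFinset ⊆ t) (g : α → ℕ → M) (hg : ∀ r, g r 0 = 1) :
    ∏ r ∈ s.toFinset, g r (s.count r) = ∏ r ∈ t, g r (s.count r) :=
  prod_subset h fun r _ hr => by
    rw [Multiset.count_eq_zero_of_notMem (by simpa using hr), hg]

lemma sum_partition_eq_sum_partition_add {M : Type*} [AddCommMonoid M] {μ : Multiset ℕ}
    (hμ : ∀ i ∈ μ, 0 < i) {k : ℕ} (hk : μ.sum ≤ k) (g : Multiset ℕ → M)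
    (hg : ∀ s, ¬ μ ≤ s → g s = 0) :
    ∑ ν : Nat.Partition k, g ν.parts = ∑ ρ : Nat.Partition (k - μ.sum), g (μ + ρ.parts) := by
  symm
  refine sum_bij_ne_zero (fun ρ _ _ => ⟨μ + ρ.parts, ?_, ?_⟩) (fun _ _ _ => mem_univ _) ?_ ?_
    (fun _ _ _ => rfl)
  · intro i hi
    rcases Multiset.mem_add.mp hi with hi | hi
    exacts [hμ i hi, ρ.parts_pos hi]
  · rw [Multiset.sum_add, ρ.parts_sum]
    omega
  · intro ρ₁ _ _ ρ₂ _ _ h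
    exact Nat.Partition.ext (add_left_cancel (congrArg Nat.Partition.parts h))
  · intro ν _ hν
    have hle : μ ≤ ν.parts := by_contra fun h => hν (hg _ h)
    have hsum : (ν.parts - μ).sum = k - μ.sum := by
      have := congrArg Multiset.sum (add_tsub_cancel_of_le hle)
      rw [Multiset.sum_add, ν.parts_sum] at this
      omega
    refine ⟨⟨ν.parts - μ, fun hi => ν.parts_pos (Multiset.mem_of_le (Multiset.sub_le_self _ _) hi),
      hsum⟩, mem_univ _, ?_, Nat.Partition.ext (add_tsub_cancel_of_le hle)⟩
    simpa [add_tsub_cancel_of_le hle] using hν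

lemma prod_C_mul_X_pow_pow_count {R : Type*} [CommSemiring R] (s : Multiset ℕ) (a : ℕ → R) :
    ∏ r ∈ s.toFinset, (C (a r) * X ^ r) ^ s.count r = C (s.map a).prod * X ^ s.sum := by
  rw [← prod_multiset_map_count]
  induction s using Multiset.induction_on with
  | empty => simp
  | cons r s ih =>
    rw [Multiset.map_cons, Multiset.prod_cons, ih, Multiset.map_cons, Multiset.prod_cons,
      Multiset.sum_cons, map_mul, pow_add]
    ring

lemma constantCoeff_X_pow_of_pos {R : Type*} [Semiring R] {r : ℕ} (hr : 0 < r) :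
    constantCoeff (X ^ r : R⟦X⟧) = 0 := by
  rw [map_pow, constantCoeff_X, zero_pow hr.ne']

lemma derivative_mk_one {R : Type*} [CommRing R] :
    d⁄dX R (PowerSeries.mk 1) = PowerSeries.mk 1 * PowerSeries.mk 1 := by
  have hmk := mk_one_mul_one_sub_eq_one R
  have hD := congrArg (d⁄dX R) hmk
  rw [Derivation.leibniz, map_sub, derivative_X, Derivation.map_one_eq_zero, smul_eq_mul,
    smul_eq_mul] at hD
  linear_combination PowerSeries.mk 1 * hD - d⁄dX R (PowerSeries.mk 1) * hmk

lemma binomOf_eq_zero_of_not_le {s μ : Multiset ℕ} (h : ¬ μ ≤ s) : binomOf s μ = 0 := by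
  obtain ⟨r, hr⟩ := not_forall.mp (mt Multiset.le_iff_count.mpr h)
  exact prod_eq_zero (Multiset.mem_toFinset.mpr (Multiset.count_pos.mp (by omega)))
    (Nat.choose_eq_zero_of_lt (not_le.mp hr))

lemma binomOf_add_ne_zero (μ ρ : Multiset ℕ) : binomOf (μ + ρ) μ ≠ 0 :=
  prod_ne_zero_iff.mpr fun r _ => (Nat.choose_pos (by simp)).ne'

lemma binomOf_add_mul_vOf_mul_vOf (μ ρ : Multiset ℕ) :
    binomOf (μ + ρ) μ * (vOf μ * vOf ρ) = vOf (μ + ρ) := by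
  have hμ : μ.toFinset ⊆ (μ + ρ).toFinset := by simp
  have hρ : ρ.toFinset ⊆ (μ + ρ).toFinset := by simp
  have hv := fun {s : Multiset ℕ} (hs : s.toFinset ⊆ (μ + ρ).toFinset) =>
    prod_toFinset_count_of_subset hs (fun r n => n ! * (2 * r) ^ n) (by simp)
  rw [binomOf, vOf, vOf, vOf,
    prod_toFinset_count_of_subset hμ (fun r n => ((μ + ρ).count r).choose n) (by simp),
    hv hμ, hv hρ,
    ← prod_mul_distrib, ← prod_mul_distrib]
  refine prod_congr rfl fun r _ => ?_
  rw [Multiset.count_add, ← Nat.choose_mul_factorial_mul_factorial (Nat.le_add_right _ (ρ.count r)),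
    Nat.add_sub_cancel_left, pow_add]
  ring

lemma binomOf_add_div_vOf (μ ρ : Multiset ℕ) :
    (binomOf (μ + ρ) μ : ℚ) / vOf (μ + ρ) = (vOf μ : ℚ)⁻¹ * (vOf ρ : ℚ)⁻¹ := by
  rw [← binomOf_add_mul_vOf_mul_vOf, Nat.cast_mul,
    div_mul_cancel_left₀ (by exact_mod_cast binomOf_add_ne_zero μ ρ), Nat.cast_mul, mul_inv]

section ExpSeries

variable {A : Type*} [CommRing A] [Algebra ℚ A]

def partWeight (f : ℕ → A) (s : Multiset ℕ) : A :=
  ∏ r ∈ s.toFinset, ((s.count r)! : ℚ)⁻¹ • f r ^ s.count r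

-- `expSeries f = exp (∑ r, f r • X ^ r)`, expanded over partitions.
noncomputable def expSeries (f : ℕ → A) : A⟦X⟧ :=
  mk fun m => ∑ ν : Nat.Partition m, partWeight f ν.parts

lemma constantCoeff_expSeries (f : ℕ → A) : constantCoeff (expSeries f) = 1 := by
  rw [expSeries, ← coeff_zero_eq_constantCoeff_apply, coeff_mk, Fintype.sum_unique]
  simp [Nat.Partition.partition_zero_parts, partWeight]

lemma partWeight_cons (f : ℕ → A) (r : ℕ) (s : Multiset ℕ) :
    (s.count r + 1) • partWeight f (r ::ₘ s) = f r * partWeight f s := by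
  have hr : r ∈ insert r s.toFinset := mem_insert_self r _
  have hfac : ((s.count r + 1 : ℕ) : ℚ) * ((s.count r + 1)! : ℚ)⁻¹ = ((s.count r)! : ℚ)⁻¹ := by
    rw [Nat.factorial_succ, Nat.cast_mul, mul_inv, ← mul_assoc, mul_inv_cancel₀ (by positivity),
      one_mul]
  rw [partWeight, partWeight, Multiset.toFinset_cons,
    prod_toFinset_count_of_subset (subset_insert r s.toFinset)
      (fun x n => ((n ! : ℚ)⁻¹ • f x ^ n)) (by simp), ← mul_prod_erase _ _ hr,
    ← mul_prod_erase _ _ hr, ← Nat.cast_smul_eq_nsmul ℚ, ← smul_mul_assoc, smul_smul,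
    Multiset.count_cons_self, hfac, pow_succ', ← mul_smul_comm, mul_assoc]
  congr 2
  exact prod_congr rfl fun x hx => by rw [Multiset.count_cons_of_ne (ne_of_mem_erase hx)]

lemma sum_count_smul_partWeight (f : ℕ → A) {m r : ℕ} (hr : 0 < r) (hrm : r ≤ m) :
    ∑ ν : Nat.Partition m, ν.parts.count r • partWeight f ν.parts
      = f r * ∑ ρ : Nat.Partition (m - r), partWeight f ρ.parts := by
  rw [sum_partition_eq_sum_partition_add (μ := {r}) (k := m) (by simpa using hr)
    (by simpa using hrm) (fun s => s.count r • partWeight f s)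
    fun s hs => by rw [Multiset.count_eq_zero.mpr (by simpa using hs), zero_smul],
    Multiset.sum_singleton, mul_sum]
  exact sum_congr rfl fun ρ _ => by
    rw [Multiset.singleton_add, Multiset.count_cons_self, partWeight_cons]

lemma nsmul_sum_partWeight (f : ℕ → A) (m : ℕ) :
    m • ∑ ν : Nat.Partition m, partWeight f ν.parts
      = ∑ r ∈ range (m + 1), r • f r * ∑ ρ : Nat.Partition (m - r), partWeight f ρ.parts := by
  have hm : ∀ ν : Nat.Partition m, m = ∑ r ∈ range (m + 1), r * ν.parts.count r := by
    intro ν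
    conv_lhs => rw [← ν.parts_sum, Finset.sum_multiset_count]
    refine (sum_toFinset_count_of_subset (fun r hr => ?_) (fun r n => n • r) (by simp)).trans
      (sum_congr rfl fun r _ => by rw [smul_eq_mul, mul_comm])
    exact mem_range_succ_iff.mpr
      (ν.parts_sum ▸ Multiset.le_sum_of_mem (Multiset.mem_toFinset.mp hr))
  calc m • ∑ ν : Nat.Partition m, partWeight f ν.parts
      = ∑ r ∈ range (m + 1), r • ∑ ν : Nat.Partition m, ν.parts.count r • partWeight f ν.parts := by
        simp_rw [smul_sum, smul_smul]
        rw [sum_comm]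
        exact sum_congr rfl fun ν _ => by rw [← sum_smul, ← hm ν]
    _ = _ := sum_congr rfl fun r hr => by
        rcases Nat.eq_zero_or_pos r with rfl | hr0
        · simp
        · rw [sum_count_smul_partWeight f hr0 (mem_range_succ_iff.mp hr), smul_mul_assoc]

lemma X_mul_derivative_expSeries (f : ℕ → A) :
    X * d⁄dX A (expSeries f) = PowerSeries.mk (fun r => r • f r) * expSeries f := by
  ext m
  rcases m with _ | m
  · simp
  rw [coeff_succ_X_mul, coeff_derivative, coeff_mul,
    Finset.Nat.sum_antidiagonal_eq_sum_range_succ_mk]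
  simp only [expSeries, coeff_mk]
  rw [mul_comm, ← Nat.cast_succ, ← nsmul_eq_mul, nsmul_sum_partWeight]

lemma eq_of_X_mul_derivative_eq {P E F : A⟦X⟧} (hP : constantCoeff P = 0)
    (hE : X * d⁄dX A E = P * E) (hF : X * d⁄dX A F = P * F)
    (h0 : constantCoeff E = constantCoeff F) : E = F := by
  rw [← sub_eq_zero]
  set G := E - F
  have hG : X * d⁄dX A G = P * G := by rw [map_sub, mul_sub, hE, hF, mul_sub]
  ext n
  induction n using Nat.strong_induction_on with
  | _ n ih =>
  rcases n with _ | n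
  · simp [G, h0]
  have key := congrArg (coeff (n + 1)) hG
  rw [coeff_succ_X_mul, coeff_derivative, coeff_mul, Finset.Nat.sum_antidiagonal_succ,
    coeff_zero_eq_constantCoeff_apply, hP, zero_mul, zero_add,
    sum_eq_zero fun p hp => by
      rw [ih p.2 (by have := mem_antidiagonal.mp hp; omega), map_zero, mul_zero]] at key
  have hunit : IsUnit ((n + 1 : ℕ) : A) := by
    rw [← map_natCast (algebraMap ℚ A)]
    exact (isUnit_iff_ne_zero.mpr (by positivity)).map _
  rw [map_zero, ← hunit.mul_left_eq_zero]
  exact_mod_cast key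

lemma expSeries_add (f g : ℕ → A) : expSeries (f + g) = expSeries f * expSeries g := by
  have hP : PowerSeries.mk (fun r => r • (f + g) r)
      = PowerSeries.mk (fun r => r • f r) + PowerSeries.mk (fun r => r • g r) := by
    ext; simp
  refine eq_of_X_mul_derivative_eq ?_ (X_mul_derivative_expSeries _) ?_ ?_
  · rw [← coeff_zero_eq_constantCoeff_apply, coeff_mk, zero_smul]
  · rw [Derivation.leibniz, smul_eq_mul, smul_eq_mul, hP]
    linear_combination expSeries f * X_mul_derivative_expSeries g +
      expSeries g * X_mul_derivative_expSeries f
  · rw [map_mul, constantCoeff_expSeries, constantCoeff_expSeries, constantCoeff_expSeries,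
      mul_one]

lemma partWeight_pow_mul (c : A) (f : ℕ → A) (s : Multiset ℕ) :
    partWeight (fun r => c ^ r * f r) s = c ^ s.sum * partWeight f s := by
  rw [partWeight, partWeight, Finset.sum_multiset_count, ← prod_pow_eq_pow_sum, ← prod_mul_distrib]
  refine prod_congr rfl fun r _ => ?_
  rw [mul_pow, ← pow_mul, mul_smul_comm, smul_eq_mul, mul_comm r]

lemma expSeries_pow_mul (c : A) (f : ℕ → A) :
    expSeries (fun r => c ^ r * f r) = rescale c (expSeries f) := by
  ext m
  simp only [expSeries, coeff_mk, coeff_rescale, mul_sum, partWeight_pow_mul,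
    Nat.Partition.parts_sum]

lemma expSeries_inv_natCast : expSeries (fun r => ((r : ℚ)⁻¹ • 1 : A)) = PowerSeries.mk 1 := by
  have hP : PowerSeries.mk (fun r => r • ((r : ℚ)⁻¹ • 1 : A)) = X * PowerSeries.mk 1 := by
    ext (_ | n)
    · simp
    · rw [coeff_succ_X_mul, coeff_mk, coeff_mk, ← Nat.cast_smul_eq_nsmul ℚ, smul_smul,
        mul_inv_cancel₀ (by positivity), one_smul, Pi.one_apply]
  refine eq_of_X_mul_derivative_eq ?_ (X_mul_derivative_expSeries _) ?_ ?_
  · rw [hP, map_mul, constantCoeff_X, zero_mul]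
  · rw [hP, derivative_mk_one, mul_assoc]
  · rw [constantCoeff_expSeries, ← coeff_zero_eq_constantCoeff_apply, coeff_mk, Pi.one_apply]

lemma inv_vOf_smul_prod_map (h : ℕ → A) (s : Multiset ℕ) :
    (vOf s : ℚ)⁻¹ • (s.map h).prod = partWeight (fun r => (2 * r : ℚ)⁻¹ • h r) s := by
  rw [Finset.prod_multiset_map_count, vOf, partWeight, Nat.cast_prod, ← prod_inv_distrib,
    Algebra.smul_def, map_prod, ← prod_mul_distrib]
  refine prod_congr rfl fun r _ => ?_
  rw [Algebra.smul_def, Algebra.smul_def, mul_pow (algebraMap ℚ A _), ← map_pow, ← mul_assoc,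
    ← map_mul]
  congr 2
  push_cast
  rw [mul_inv, inv_pow]

noncomputable def binomSeries (h : ℕ → A) (μ : Multiset ℕ) : A⟦X⟧ :=
  mk fun k => ∑ ν : Nat.Partition k, ((binomOf ν.parts μ : ℚ) / vOf ν.parts) • (ν.parts.map h).prod

lemma binomSeries_eq (h : ℕ → A) {μ : Multiset ℕ} (hμ : ∀ i ∈ μ, 0 < i) :
    binomSeries h μ
      = C ((vOf μ : ℚ)⁻¹ • (μ.map h).prod) * X ^ μ.sum *
          expSeries (fun r => (2 * r : ℚ)⁻¹ • h r) := by
  have hvanish : ∀ s, ¬ μ ≤ s → ((binomOf s μ : ℚ) / vOf s) • (s.map h).prod = 0 := fun s hs => by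
    rw [binomOf_eq_zero_of_not_le hs, Nat.cast_zero, zero_div, zero_smul]
  ext k
  rw [binomSeries, coeff_mk, mul_comm (C _), mul_assoc, coeff_X_pow_mul']
  split_ifs with hk
  · rw [sum_partition_eq_sum_partition_add hμ hk _ hvanish, coeff_C_mul, expSeries, coeff_mk,
      mul_sum]
    refine sum_congr rfl fun ρ _ => ?_
    rw [binomOf_add_div_vOf, Multiset.map_add, Multiset.prod_add, ← smul_mul_smul_comm,
      inv_vOf_smul_prod_map, inv_vOf_smul_prod_map]
  · refine sum_eq_zero fun ν _ => hvanish _ fun hle => hk ?_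
    obtain ⟨ρ, hρ⟩ := Multiset.le_iff_exists_add.mp hle
    have := congrArg Multiset.sum hρ
    rw [Multiset.sum_add, ν.parts_sum] at this
    omega

end ExpSeries

section

variable {k : Type*} [Field k] {p : k⟦X⟧}

lemma inv_one_sub_add_inv_one_add (hp : constantCoeff p = 0) :
    (1 - p)⁻¹ + (1 + p)⁻¹ = 2 * (1 - p ^ 2)⁻¹ := by
  have ha : (1 - p) * (1 - p)⁻¹ = 1 := PowerSeries.mul_inv_cancel _ (by simp [hp])
  have hb : (1 + p) * (1 + p)⁻¹ = 1 := PowerSeries.mul_inv_cancel _ (by simp [hp])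
  rw [show 1 - p ^ 2 = (1 - p) * (1 + p) by ring, PowerSeries.mul_inv_rev]
  linear_combination (-(1 - p)⁻¹) * hb - (1 + p)⁻¹ * ha

lemma inv_one_sub_eq_one_add_mul_inv (hp : constantCoeff p = 0) :
    (1 - p)⁻¹ = 1 + p * (1 - p)⁻¹ := by
  linear_combination PowerSeries.mul_inv_cancel (1 - p) (by simp [hp])

end

lemma half_inv_one_sub_add_half_inv_one_add :
    ((fun r : ℕ => (2 * (r : ℚ))⁻¹ • (1 - X ^ r : ℚ⟦X⟧)⁻¹) +
        fun r : ℕ => (2 * (r : ℚ))⁻¹ • (1 + X ^ r : ℚ⟦X⟧)⁻¹)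
      = fun r : ℕ => (r : ℚ)⁻¹ • (1 - X ^ (2 * r) : ℚ⟦X⟧)⁻¹ := by
  funext r
  rcases Nat.eq_zero_or_pos r with rfl | hr
  · simp
  rw [Pi.add_apply, ← smul_add, inv_one_sub_add_inv_one_add (constantCoeff_X_pow_of_pos hr),
    ← pow_mul, mul_comm r, smul_eq_C_mul, smul_eq_C_mul, ← mul_assoc, ← map_ofNat C 2, ← map_mul]
  congr 2
  ring

lemma expSeries_inv_one_sub_X_pow_two_mul :
    expSeries (fun r => (r : ℚ)⁻¹ • (1 - X ^ (2 * r) : ℚ⟦X⟧)⁻¹)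
      = PowerSeries.mk fun m => (∏ i ∈ Icc 1 m, (1 - X ^ (2 * i) : ℚ⟦X⟧))⁻¹ := by
  set F := fun r : ℕ => (r : ℚ)⁻¹ • (1 - X ^ (2 * r) : ℚ⟦X⟧)⁻¹
  have hF : F = (fun r : ℕ => (r : ℚ)⁻¹ • (1 : ℚ⟦X⟧)) + fun r => (X ^ 2) ^ r * F r := by
    funext r
    rcases Nat.eq_zero_or_pos r with rfl | hr
    · simp [F]
    rw [Pi.add_apply, ← pow_mul, mul_smul_comm, ← smul_add,
      ← inv_one_sub_eq_one_add_mul_inv (constantCoeff_X_pow_of_pos (by omega))]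
  have hE : (1 - X) * expSeries F = rescale (X ^ 2) (expSeries F) := by
    conv_lhs => rw [hF, expSeries_add, expSeries_inv_natCast, expSeries_pow_mul, ← mul_assoc,
      mul_comm (1 - X), mk_one_mul_one_sub_eq_one, one_mul]
  have hstep : ∀ m, coeff (m + 1) (expSeries F) * (1 - X ^ (2 * (m + 1)))
      = coeff m (expSeries F) := fun m => by
    have := congrArg (coeff (m + 1)) hE
    rw [sub_mul, one_mul, map_sub, coeff_succ_X_mul, coeff_rescale, ← pow_mul] at this
    linear_combination this
  refine PowerSeries.ext fun m => ?_
  rw [coeff_mk, PowerSeries.eq_inv_iff_mul_eq_one]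
  · induction m with
    | zero => simp [constantCoeff_expSeries]
    | succ m ih =>
      rw [prod_Icc_succ_top (by omega)]
      linear_combination (∏ i ∈ Icc 1 m, (1 - X ^ (2 * i) : ℚ⟦X⟧)) * hstep m + ih
  · rw [map_prod]
    exact prod_ne_zero_iff.mpr fun i hi => by
      simp [constantCoeff_X_pow_of_pos (by have := (mem_Icc.mp hi).1; omega : 0 < 2 * i)]

lemma mk_gSer (μ lam : Multiset ℕ) :
    PowerSeries.mk (gSer μ lam)
      = binomSeries (fun r => (1 - X ^ r : ℚ⟦X⟧)⁻¹) μ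
        * binomSeries (fun r => (1 + X ^ r : ℚ⟦X⟧)⁻¹) lam := by
  refine PowerSeries.ext fun n => ?_
  rw [coeff_mul, Finset.Nat.sum_antidiagonal_eq_sum_range_succ_mk]
  simp only [binomSeries, coeff_mk, gSer]
  refine sum_congr rfl fun k _ => ?_
  rw [sum_mul_sum]
  refine sum_congr rfl fun ν _ => sum_congr rfl fun κ _ => ?_
  rw [facMinus, facPlus, ← prod_multiset_map_count, ← prod_multiset_map_count, smul_eq_C_mul,
    smul_eq_C_mul, mul_div_mul_comm, map_mul]
  ring

/-- **Theorem 1.10**: the double generating function, in `ℚ[[z]][[u]]`, for the twisted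
Betti numbers of the spaces of maximal tori in type B/C:
`Σ_{n≥0} g_n(μ,λ) u^n = (1/(v_μ v_λ)) ∏_r (u^r/(1-z^r))^{n_r(μ)}
  ∏_r (u^r/(1+z^r))^{n_r(λ)} · Σ_{m≥0} u^m/∏_{i=1}^m (1-z^{2i})`,
the last factor being the expansion of `∏_{r≥1} (1-uz^{2r-2})^{-1}`. -/
theorem double_genfun_twisted_betti (A B : ℕ) (mu : Nat.Partition A)
    (lam : Nat.Partition B) :
    (PowerSeries.mk fun n : ℕ => gSer mu.parts lam.parts n
      : PowerSeries (PowerSeries ℚ))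
    =
    PowerSeries.C (R := PowerSeries ℚ)
        (PowerSeries.C (R := ℚ) (1 / ((vOf mu.parts : ℚ) * (vOf lam.parts : ℚ)))) *
      (∏ r ∈ mu.parts.toFinset,
        (PowerSeries.C (R := PowerSeries ℚ) ((1 - (PowerSeries.X : PowerSeries ℚ) ^ r)⁻¹) *
          (PowerSeries.X : PowerSeries (PowerSeries ℚ)) ^ r) ^ (mu.parts.count r)) *
      (∏ r ∈ lam.parts.toFinset,
        (PowerSeries.C (R := PowerSeries ℚ) ((1 + (PowerSeries.X : PowerSeries ℚ) ^ r)⁻¹) *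
          (PowerSeries.X : PowerSeries (PowerSeries ℚ)) ^ r) ^ (lam.parts.count r)) *
      (PowerSeries.mk fun m : ℕ =>
        (∏ i ∈ Finset.Icc 1 m, (1 - (PowerSeries.X : PowerSeries ℚ) ^ (2 * i)))⁻¹) := by
  rw [mk_gSer, binomSeries_eq _ fun _ => mu.parts_pos,
    binomSeries_eq _ fun _ => lam.parts_pos, prod_C_mul_X_pow_pow_count,
    prod_C_mul_X_pow_pow_count, mu.parts_sum, lam.parts_sum,
    ← expSeries_inv_one_sub_X_pow_two_mul, ← half_inv_one_sub_add_half_inv_one_add,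
    expSeries_add, smul_eq_C_mul, smul_eq_C_mul, one_div, mul_inv]
  simp only [map_mul]
  ring
end

section
/- Fix a double partition (μ,λ) with N := |μ|+|λ| ≥ 1, and let β_i ∈ ℚ be the coefficient of z^i in the power series (1/(v_μ v_λ)) · ∏_{r≥1} (1-z^r)^{-n_r(μ)} · ∏_{r≥1} (1+z^r)^{-n_r(λ)} ∈ ℚ[[z]]. Set M := lcm{2k : 1 ≤ k ≤ N}. Then the sequence (β_i) is quasipolynomial of quasiperiod M and degree at most N-1: there exist polynomials p_0, p_1, …, p_{M-1} ∈ ℚ[t], each of degree at most N-1, such that β_i = p_{i mod M}(i) for all i ≥ 0. -/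
open Finset PowerSeries

/-- the stable twisted Betti number `β_i`: the coefficient of `z^i` in
`(1/(v_μ v_λ)) ∏_{r≥1} (1-z^r)^{-n_r(μ)} ∏_{r≥1} (1+z^r)^{-n_r(λ)} ∈ ℚ[[z]]`. -/
noncomputable def stableBeta (muP lamP : Multiset ℕ) (i : ℕ) : ℚ :=
  PowerSeries.coeff i
    (PowerSeries.C (1 / ((vOf muP : ℚ) * (vOf lamP : ℚ))) * facMinus muP * facPlus lamP)

/-!
Every part `r` of `μ` divides `M`, and every part `r` of `λ` has `2r ∣ M`, so each factor
`1 - z^r` and `1 + z^r` divides `1 - z^M`. Since there are at most `N` parts, the series is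
`Q(z) / (1 - z^M)^N` for a polynomial `Q` of degree `NM - N < NM`. The coefficients of
`z^d / (1 - z^M)^N` are supported on `i ≡ d [MOD M]`, where they equal
`((i - d)/M + N - 1).choose (N - 1)`, a polynomial in `i` of degree `N - 1`. This polynomial
vanishes at `i = d - M, …, d - (N - 1)M`, and because `d < NM` that is exactly what is needed for
the formula to hold for every `i ≥ 0` and not just for `i ≥ d`. Summing over the monomials of `Q`
gives the quasipolynomial.
-/

open scoped Polynomial Nat

section Quasipolynomial

variable {K : Type*} [Field K] {M D : ℕ}

def IsQuasipolynomial (M D : ℕ) (f : ℕ → K) : Prop :=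
  ∃ p : ℕ → K[X], (∀ j < M, (p j).degree ≤ D) ∧ ∀ i, f i = (p (i % M)).eval (i : K)

namespace IsQuasipolynomial

lemma zero : IsQuasipolynomial M D (0 : ℕ → K) :=
  ⟨0, fun _ _ => by simp, fun _ => by simp⟩

lemma add {f g : ℕ → K} (hf : IsQuasipolynomial M D f) (hg : IsQuasipolynomial M D g) :
    IsQuasipolynomial M D (f + g) := by
  obtain ⟨p, hp_deg, hp⟩ := hf
  obtain ⟨q, hq_deg, hq⟩ := hg
  refine ⟨p + q, fun j hj => ?_, fun i => by simp [hp, hq]⟩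
  exact (Polynomial.degree_add_le _ _).trans (max_le (hp_deg j hj) (hq_deg j hj))

lemma sum {ι : Type*} (s : Finset ι) {f : ι → ℕ → K} (h : ∀ k ∈ s, IsQuasipolynomial M D (f k)) :
    IsQuasipolynomial M D (∑ k ∈ s, f k) :=
  Finset.sum_induction _ _ (fun _ _ => add) zero h

lemma const_mul {f : ℕ → K} (c : K) (hf : IsQuasipolynomial M D f) :
    IsQuasipolynomial M D (fun i => c * f i) := by
  obtain ⟨p, hp_deg, hp⟩ := hf
  refine ⟨fun j => c • p j, fun j hj => ?_, fun i => by simp [hp]⟩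
  exact (Polynomial.degree_smul_le _ _).trans (hp_deg j hj)

lemma ite_mod_eq {q : K[X]} (hq : q.degree ≤ D) (r : ℕ) :
    IsQuasipolynomial M D (fun i => if i % M = r then q.eval (i : K) else 0) := by
  refine ⟨fun j => if j = r then q else 0, fun j _ => ?_, fun i => ?_⟩
  · dsimp only
    split_ifs
    · exact hq
    · simp
  · dsimp only
    split_ifs <;> simp

end IsQuasipolynomial

noncomputable def binomialPoly (M D : ℕ) (a : K) : K[X] :=
  (D ! : K)⁻¹ • (ascPochhammer K D).comp
    (Polynomial.C (M : K)⁻¹ * (Polynomial.X - Polynomial.C a) + 1)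

lemma degree_binomialPoly_le (M D : ℕ) (a : K) : (binomialPoly M D a).degree ≤ D := by
  refine (Polynomial.degree_smul_le _ _).trans (Polynomial.degree_le_of_natDegree_le ?_)
  refine Polynomial.natDegree_comp_le.trans ?_
  have : (Polynomial.C (M : K)⁻¹ * (Polynomial.X - Polynomial.C a) + 1).natDegree ≤ 1 := by
    compute_degree
  simpa using Nat.mul_le_mul_left D this

variable [CharZero K]

lemma eval_binomialPoly_add_mul (hM : M ≠ 0) (D : ℕ) (a : K) (t : ℕ) :
    (binomialPoly M D a).eval (a + M * t) = (t + D).choose D := by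
  have hM' : (M : K) ≠ 0 := Nat.cast_ne_zero.mpr hM
  have hD : (D ! : K) ≠ 0 := Nat.cast_ne_zero.mpr D.factorial_ne_zero
  rw [binomialPoly, Polynomial.eval_smul, Polynomial.eval_comp]
  simp only [Polynomial.eval_add, Polynomial.eval_mul, Polynomial.eval_sub, Polynomial.eval_C,
    Polynomial.eval_X, Polynomial.eval_one, add_sub_cancel_left, inv_mul_cancel_left₀ hM']
  rw [← Nat.cast_succ, ascPochhammer_nat_eq_natCast_ascFactorial,
    Nat.ascFactorial_eq_factorial_mul_choose, Nat.cast_mul, smul_eq_mul, inv_mul_cancel_left₀ hD]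

lemma eval_binomialPoly_sub_mul (hM : M ≠ 0) {D s : ℕ} (a : K) (hs : 1 ≤ s) (hsD : s ≤ D) :
    (binomialPoly M D a).eval (a - M * s) = 0 := by
  have hM' : (M : K) ≠ 0 := Nat.cast_ne_zero.mpr hM
  rw [binomialPoly, Polynomial.eval_smul, Polynomial.eval_comp]
  simp only [Polynomial.eval_add, Polynomial.eval_mul, Polynomial.eval_sub, Polynomial.eval_C,
    Polynomial.eval_X, Polynomial.eval_one, sub_sub_cancel_left, mul_neg,
    inv_mul_cancel_left₀ hM']
  have : -(s : K) + 1 = -((s - 1 : ℕ) : K) := by push_cast [Nat.cast_sub hs]; ring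
  rw [this, ascPochhammer_eval_neg_coe_nat_of_lt (by omega), smul_zero]

end Quasipolynomial

section ExpandInvOneSubPow

variable {K : Type*} [Field K] {M : ℕ}

lemma coeff_expand_invOneSubPow (hM : M ≠ 0) (D n : ℕ) :
    coeff n (expand M hM (invOneSubPow K (D + 1)).val) =
      if M ∣ n then ((D + n / M).choose D : K) else 0 := by
  rw [coeff_expand, invOneSubPow_val_succ_eq_mk_add_choose, coeff_mk]

lemma one_sub_X_pow_pow_mul_expand_invOneSubPow (hM : M ≠ 0) (N : ℕ) :
    (1 - X ^ M : K⟦X⟧) ^ N * expand M hM (invOneSubPow K N).val = 1 := by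
  have h := congrArg (expand M hM) (invOneSubPow K N).inv_val
  rwa [invOneSubPow_inv_eq_one_sub_pow, map_mul, map_pow, map_sub, map_one, expand_X] at h

variable [CharZero K]

lemma isQuasipolynomial_coeff_X_pow_mul_expand_invOneSubPow (hM : M ≠ 0) {D d : ℕ}
    (hd : d < (D + 1) * M) :
    IsQuasipolynomial M D
      (fun i => coeff i (X ^ d * expand M hM (invOneSubPow K (D + 1)).val)) := by
  convert IsQuasipolynomial.ite_mod_eq (degree_binomialPoly_le M D (d : K)) (d % M) using 1
  funext i
  rw [coeff_X_pow_mul', coeff_expand_invOneSubPow]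
  by_cases hmod : i % M = d % M
  · rw [if_pos hmod]
    rcases le_or_gt d i with hdi | hid
    · obtain ⟨t, ht⟩ : M ∣ i - d := (Nat.modEq_iff_dvd' hdi).mp hmod.symm
      have hi : (i : K) = d + M * t := by exact_mod_cast (by omega : i = d + M * t)
      rw [if_pos hdi, if_pos ⟨t, ht⟩, ht, Nat.mul_div_cancel_left _ (Nat.pos_of_ne_zero hM), hi,
        eval_binomialPoly_add_mul hM, add_comm t]
    · obtain ⟨s, hs⟩ : M ∣ d - i := (Nat.modEq_iff_dvd' hid.le).mp hmod
      have hs1 : 1 ≤ s := Nat.pos_of_ne_zero (by rintro rfl; rw [mul_zero] at hs; omega)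
      have hsD : s ≤ D := by
        have : M * s < M * (D + 1) := by rw [← hs, mul_comm M]; omega
        exact Nat.lt_succ_iff.mp (Nat.lt_of_mul_lt_mul_left this)
      have hi : (i : K) = d - M * s := by
        rw [eq_sub_iff_add_eq]; exact_mod_cast (by omega : i + M * s = d)
      rw [if_neg hid.not_ge, hi, eval_binomialPoly_sub_mul hM _ hs1 hsD]
  · rw [if_neg hmod, ite_eq_right_iff]
    intro hdi
    rw [if_neg]
    exact fun hdvd => hmod ((Nat.modEq_iff_dvd' hdi).mpr hdvd).symm

lemma isQuasipolynomial_coeff_mul_expand_invOneSubPow (hM : M ≠ 0) {D : ℕ} (Q : K[X])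
    (hQ : Q.natDegree < (D + 1) * M) :
    IsQuasipolynomial M D
      (fun i => coeff i ((Q : K⟦X⟧) * expand M hM (invOneSubPow K (D + 1)).val)) := by
  have hsum : ∀ i, coeff i ((Q : K⟦X⟧) * expand M hM (invOneSubPow K (D + 1)).val) =
      ∑ d ∈ range ((D + 1) * M),
        Q.coeff d * coeff i (X ^ d * expand M hM (invOneSubPow K (D + 1)).val) := by
    intro i
    rw [← Polynomial.eval₂_C_X_eq_coe, Polynomial.eval₂_eq_sum_range' _ hQ, sum_mul, map_sum]
    simp_rw [mul_assoc, coeff_C_mul]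
  simp_rw [hsum]
  convert IsQuasipolynomial.sum (range ((D + 1) * M)) fun d hd =>
    (isQuasipolynomial_coeff_X_pow_mul_expand_invOneSubPow hM (mem_range.mp hd)).const_mul
      (Q.coeff d) using 1
  funext i
  simp

end ExpandInvOneSubPow

lemma Multiset.prod_map_dvd_pow_card {ι M : Type*} [CommMonoid M] {ν : Multiset ι} {g : ι → M}
    {a : M} (h : ∀ r ∈ ν, g r ∣ a) : (ν.map g).prod ∣ a ^ Multiset.card ν := by
  simpa [Multiset.map_const', Multiset.prod_replicate] using
    Multiset.prod_dvd_prod_of_dvd g (fun _ => a) h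

lemma one_add_dvd_one_sub_pow_of_even {R : Type*} [CommRing R] (x : R) {n : ℕ} (hn : Even n) :
    1 + x ∣ 1 - x ^ n := by
  obtain ⟨k, rfl⟩ := hn
  rw [← two_mul, pow_mul]
  exact dvd_trans ⟨1 - x, by ring⟩ (one_sub_dvd_one_sub_pow (x ^ 2) k)

lemma Polynomial.natDegree_one_sub_X_pow {R : Type*} [Ring R] [Nontrivial R] (n : ℕ) :
    (1 - X ^ n : R[X]).natDegree = n := by
  rw [← neg_sub, natDegree_neg, ← map_one C, natDegree_X_pow_sub_C]

lemma Polynomial.natDegree_one_add_X_pow {R : Type*} [Semiring R] [Nontrivial R] (n : ℕ) :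
    (1 + X ^ n : R[X]).natDegree = n := by
  rw [add_comm, ← map_one C, natDegree_X_pow_add_C]

lemma Polynomial.natDegree_multiset_prod_map_eq_sum {R : Type*} [CommRing R] [IsDomain R]
    {ν : Multiset ℕ} {g : ℕ → R[X]} (hν : ∀ r ∈ ν, 0 < r)
    (hg : ∀ r ∈ ν, (g r).natDegree = r) : (ν.map g).prod.natDegree = ν.sum := by
  have hg0 : (0 : R[X]) ∉ ν.map g := by
    simp only [Multiset.mem_map, not_exists, not_and]
    exact fun r hr h0 => (hν r hr).ne' (by rw [← hg r hr, h0, natDegree_zero])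
  rw [natDegree_multiset_prod _ hg0, Multiset.map_map]
  conv_rhs => rw [← Multiset.map_id ν]
  exact congrArg _ (Multiset.map_congr rfl hg)

lemma Polynomial.coe_multiset_prod_map {R : Type*} [CommRing R] (ν : Multiset ℕ)
    (g : ℕ → R[X]) : (((ν.map g).prod : R[X]) : R⟦X⟧) = (ν.map fun r => (g r : R⟦X⟧)).prod := by
  rw [← coeToPowerSeries.ringHom_apply, map_multiset_prod, Multiset.map_map]
  rfl

lemma PowerSeries.prod_inv_pow_count_mul_prod_map {K : Type*} [Field K] (ν : Multiset ℕ)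
    (g : ℕ → K⟦X⟧) (hg : ∀ r ∈ ν, constantCoeff (g r) ≠ 0) :
    (∏ r ∈ ν.toFinset, (g r)⁻¹ ^ ν.count r) * (ν.map g).prod = 1 := by
  rw [Finset.prod_multiset_map_count, ← Finset.prod_mul_distrib]
  refine Finset.prod_eq_one fun r hr => ?_
  rw [← mul_pow, PowerSeries.inv_mul_cancel _ (hg r (Multiset.mem_toFinset.mp hr)), one_pow]

lemma facMinus_mul_prod {ν : Multiset ℕ} (hν : ∀ r ∈ ν, 0 < r) :
    facMinus ν * ((ν.map fun r => (1 - Polynomial.X ^ r : ℚ[X])).prod : ℚ[X]) = 1 := by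
  rw [Polynomial.coe_multiset_prod_map]
  push_cast
  exact prod_inv_pow_count_mul_prod_map ν _ fun r hr => by simp [(hν r hr).ne']

lemma facPlus_mul_prod {ν : Multiset ℕ} (hν : ∀ r ∈ ν, 0 < r) :
    facPlus ν * ((ν.map fun r => (1 + Polynomial.X ^ r : ℚ[X])).prod : ℚ[X]) = 1 := by
  rw [Polynomial.coe_multiset_prod_map]
  push_cast
  exact prod_inv_pow_count_mul_prod_map ν _ fun r hr => by simp [(hν r hr).ne']

lemma Nat.Partition.card_parts_le {n : ℕ} (p : Nat.Partition n) : Multiset.card p.parts ≤ n := by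
  simpa [← p.parts_sum] using Multiset.card_nsmul_le_sum (a := 1) fun _ hr => p.parts_pos hr

section PartitionProducts

variable {R : Type*} [CommRing R] {n M : ℕ}

lemma prod_one_sub_X_pow_parts_dvd (p : Nat.Partition n) (h : ∀ r ∈ p.parts, r ∣ M) :
    (p.parts.map fun r => (1 - Polynomial.X ^ r : R[X])).prod ∣ (1 - Polynomial.X ^ M) ^ n := by
  refine (Multiset.prod_map_dvd_pow_card fun r hr => ?_).trans (pow_dvd_pow _ p.card_parts_le)
  obtain ⟨k, hk⟩ := h r hr
  rw [hk, pow_mul]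
  exact one_sub_dvd_one_sub_pow _ k

lemma prod_one_add_X_pow_parts_dvd (p : Nat.Partition n) (h : ∀ r ∈ p.parts, 2 * r ∣ M) :
    (p.parts.map fun r => (1 + Polynomial.X ^ r : R[X])).prod ∣ (1 - Polynomial.X ^ M) ^ n := by
  refine (Multiset.prod_map_dvd_pow_card fun r hr => ?_).trans (pow_dvd_pow _ p.card_parts_le)
  obtain ⟨k, hk⟩ := h r hr
  rw [hk, mul_comm 2 r, mul_assoc, pow_mul]
  exact one_add_dvd_one_sub_pow_of_even _ (even_two_mul k)

variable [IsDomain R]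

lemma natDegree_prod_one_sub_X_pow_parts (p : Nat.Partition n) :
    (p.parts.map fun r => (1 - Polynomial.X ^ r : R[X])).prod.natDegree = n := by
  rw [Polynomial.natDegree_multiset_prod_map_eq_sum (fun _ => p.parts_pos)
    fun r _ => Polynomial.natDegree_one_sub_X_pow r, p.parts_sum]

lemma natDegree_prod_one_add_X_pow_parts (p : Nat.Partition n) :
    (p.parts.map fun r => (1 + Polynomial.X ^ r : R[X])).prod.natDegree = n := by
  rw [Polynomial.natDegree_multiset_prod_map_eq_sum (fun _ => p.parts_pos)
    fun r _ => Polynomial.natDegree_one_add_X_pow r, p.parts_sum]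

end PartitionProducts

lemma exists_facMinus_mul_facPlus_eq {A B M : ℕ} (mu : Nat.Partition A) (lam : Nat.Partition B)
    (hM : M ≠ 0) (hmu : ∀ r ∈ mu.parts, r ∣ M) (hlam : ∀ r ∈ lam.parts, 2 * r ∣ M) :
    ∃ Q : ℚ[X], Q.natDegree + (A + B) = (A + B) * M ∧
      facMinus mu.parts * facPlus lam.parts = Q * expand M hM (invOneSubPow ℚ (A + B)).val := by
  set Pm := (mu.parts.map fun r => (1 - Polynomial.X ^ r : ℚ[X])).prod
  set Pp := (lam.parts.map fun r => (1 + Polynomial.X ^ r : ℚ[X])).prod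
  obtain ⟨Q, hQ⟩ := mul_dvd_mul (prod_one_sub_X_pow_parts_dvd (R := ℚ) mu hmu)
    (prod_one_add_X_pow_parts_dvd lam hlam)
  rw [← pow_add] at hQ
  refine ⟨Q, ?_, ?_⟩
  · have hT0 : (1 - Polynomial.X ^ M : ℚ[X]) ^ (A + B) ≠ 0 :=
      pow_ne_zero _ (Polynomial.ne_zero_of_natDegree_gt
        ((Polynomial.natDegree_one_sub_X_pow (R := ℚ) M).symm ▸ Nat.pos_of_ne_zero hM))
    rw [hQ, mul_ne_zero_iff, mul_ne_zero_iff] at hT0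
    obtain ⟨⟨hPm0, hPp0⟩, hQ0⟩ := hT0
    have hdeg := congrArg Polynomial.natDegree hQ
    rw [Polynomial.natDegree_pow, Polynomial.natDegree_one_sub_X_pow,
      Polynomial.natDegree_mul (mul_ne_zero hPm0 hPp0) hQ0, Polynomial.natDegree_mul hPm0 hPp0,
      natDegree_prod_one_sub_X_pow_parts, natDegree_prod_one_add_X_pow_parts] at hdeg
    omega
  · have hQ' := congrArg (fun q : ℚ[X] => (q : ℚ⟦X⟧)) hQ
    push_cast at hQ'
    calc facMinus mu.parts * facPlus lam.parts
        = facMinus mu.parts * facPlus lam.parts *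
            ((1 - X ^ M) ^ (A + B) * expand M hM (invOneSubPow ℚ (A + B)).val) := by
          rw [one_sub_X_pow_pow_mul_expand_invOneSubPow, mul_one]
      _ = (facMinus mu.parts * Pm) * (facPlus lam.parts * Pp) *
            (Q * expand M hM (invOneSubPow ℚ (A + B)).val) := by
          rw [hQ']; ring
      _ = Q * expand M hM (invOneSubPow ℚ (A + B)).val := by
          rw [facMinus_mul_prod fun _ => mu.parts_pos, facPlus_mul_prod fun _ => lam.parts_pos,
            one_mul, one_mul]

/-- **Corollary 1.14 (stable Betti numbers are quasipolynomial)**: with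
`N = |μ| + |λ| ≥ 1` and `M = lcm{2k : 1 ≤ k ≤ N}`, there are polynomials
`p_0, …, p_{M-1} ∈ ℚ[t]` of degree at most `N - 1` such that
`β_i = p_{i mod M}(i)` for all `i ≥ 0`. -/
theorem stable_betti_quasipolynomial (A B : ℕ) (mu : Nat.Partition A)
    (lam : Nat.Partition B) (hN : 1 ≤ A + B) :
    ∃ p : ℕ → Polynomial ℚ,
      (∀ j < (Finset.Icc 1 (A + B)).lcm (fun k => 2 * k),
        (p j).degree ≤ (A + B - 1 : ℕ)) ∧
      (∀ i : ℕ,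
        stableBeta mu.parts lam.parts i
          = (p (i % (Finset.Icc 1 (A + B)).lcm (fun k => 2 * k))).eval (i : ℚ)) := by
  set M := (Finset.Icc 1 (A + B)).lcm (fun k => 2 * k)
  have hM : M ≠ 0 := by simp [M, Finset.lcm_eq_zero_iff]
  have h2M : ∀ r, 1 ≤ r → r ≤ A + B → 2 * r ∣ M := fun r h1 h2 =>
    Finset.dvd_lcm (Finset.mem_Icc.mpr ⟨h1, h2⟩)
  obtain ⟨Q, hQ_deg, hF⟩ := exists_facMinus_mul_facPlus_eq mu lam hM
    (fun r hr => (dvd_mul_left r 2).trans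
      (h2M r (mu.parts_pos hr) ((mu.le_of_mem_parts hr).trans (Nat.le_add_right A B))))
    (fun r hr => h2M r (lam.parts_pos hr) ((lam.le_of_mem_parts hr).trans (Nat.le_add_left B A)))
  obtain ⟨D, hD⟩ : ∃ D, A + B = D + 1 := ⟨A + B - 1, by omega⟩
  rw [hD] at hQ_deg hF
  obtain ⟨p, hp_deg, hp⟩ := (isQuasipolynomial_coeff_mul_expand_invOneSubPow hM Q
    (Nat.lt_of_lt_of_eq (Nat.lt_add_of_pos_right D.succ_pos) hQ_deg)).const_mul
    (1 / ((vOf mu.parts : ℚ) * (vOf lam.parts : ℚ)))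
  refine ⟨p, fun j hj => hD ▸ hp_deg j hj, fun i => ?_⟩
  rw [← hp, stableBeta, mul_assoc, hF, coeff_C_mul]
end

section
/- Let n ≥ 1 and let a_1, …, a_n, b_1, …, b_n be nonnegative integers with Σ_{r=1}^n r(a_r + b_r) = n (the signed cycle type of an element of the hyperoctahedral group B_n, with a_r positive r-cycles and b_r negative r-cycles). In ℚ[[t]] set A := ∏_{k=1}^n (1-t^{2k}) / ∏_{r=1}^n (1-t^r)^{a_r} (1+t^r)^{b_r} and Q := ∏_{k=1}^∞ (1-t^{2k}) / ∏_{r=1}^n (1-t^r)^{a_r} (1+t^r)^{b_r}, where the infinite product ∏_{k=1}^∞ (1-t^{2k}) converges in the t-adic topology. Then the coefficients of t^i in A and in Q agree for all 0 ≤ i ≤ 2n+1, while the coefficient of t^{2n+2} in A - Q equals 1; in particular the agreement range i ≤ 2n+1 is sharp. -/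
open Finset PowerSeries

/-- The infinite product `∏_{k=1}^∞ (1-t^{2k}) ∈ ℚ[[t]]` (its `t`-adic limit): each
coefficient of `t^i` stabilizes in the partial products, since the factors with
`k > i` only affect degrees `≥ 2(i+1) > i`; so we may define the coefficient of `t^i`
to be that of the partial product `∏_{k=1}^{i} (1-t^{2k})`. -/
noncomputable def infProdEven : PowerSeries ℚ :=
  PowerSeries.mk fun i =>
    PowerSeries.coeff (R := ℚ) i
      (∏ k ∈ Finset.Icc 1 i, (1 - (PowerSeries.X : PowerSeries ℚ) ^ (2 * k)))

/-! The truncated product `∏_{k ≤ n} (1 - t^{2k})` and the infinite one differ by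
`t^{2n+2}` plus higher order terms, the leading term coming from the first omitted factor
`1 - t^{2(n+1)}`. Both series of the theorem are these products divided by the same `D`,
and `D` has constant term `1`, so their difference is again `t^{2n+2}` plus higher order terms. -/

namespace PowerSeries

theorem coeff_mul_of_X_pow_dvd {R : Type*} [CommSemiring R] {N : ℕ} {f : R⟦X⟧}
    (hf : X ^ N ∣ f) (g : R⟦X⟧) :
    coeff N (f * g) = coeff N f * constantCoeff g := by
  obtain ⟨e, rfl⟩ := hf
  rw [mul_assoc, coeff_X_pow_mul', if_pos le_rfl, coeff_X_pow_mul', if_pos le_rfl, Nat.sub_self,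
    coeff_zero_eq_constantCoeff_apply, coeff_zero_eq_constantCoeff_apply, map_mul]

variable {R : Type*} [CommRing R]

theorem constantCoeff_prod_one_sub_X_pow_two_mul (m : ℕ) :
    constantCoeff (∏ k ∈ Icc 1 m, (1 - X ^ (2 * k) : R⟦X⟧)) = 1 := by
  rw [map_prod]
  refine prod_eq_one fun k hk => ?_
  have hk : 2 * k ≠ 0 := by simp at hk; omega
  simp [zero_pow hk]

theorem prod_one_sub_X_pow_two_mul_succ (m : ℕ) :
    ∏ k ∈ Icc 1 (m + 1), (1 - X ^ (2 * k) : R⟦X⟧) =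
      ∏ k ∈ Icc 1 m, (1 - X ^ (2 * k) : R⟦X⟧) -
        X ^ (2 * (m + 1)) * ∏ k ∈ Icc 1 m, (1 - X ^ (2 * k) : R⟦X⟧) := by
  rw [prod_Icc_succ_top (Nat.le_add_left 1 m)]
  ring

theorem X_pow_dvd_prod_one_sub_X_pow_two_mul_sub {m m' : ℕ} (h : m ≤ m') :
    X ^ (2 * (m + 1)) ∣
      ∏ k ∈ Icc 1 m, (1 - X ^ (2 * k) : R⟦X⟧) -
        ∏ k ∈ Icc 1 m', (1 - X ^ (2 * k) : R⟦X⟧) := by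
  induction m', h using Nat.le_induction with
  | base => simp
  | succ m' hm ih =>
    rw [prod_one_sub_X_pow_two_mul_succ, sub_sub_eq_add_sub, add_sub_right_comm]
    exact dvd_add ih (dvd_mul_of_dvd_left (pow_dvd_pow X (by omega)) _)

theorem coeff_prod_one_sub_X_pow_two_mul_eq {m m' i : ℕ} (hi : i < 2 * (min m m' + 1)) :
    coeff i (∏ k ∈ Icc 1 m, (1 - X ^ (2 * k) : R⟦X⟧)) =
      coeff i (∏ k ∈ Icc 1 m', (1 - X ^ (2 * k) : R⟦X⟧)) := by
  rw [← sub_eq_zero, ← map_sub]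
  rcases le_total m m' with h | h
  · exact X_pow_dvd_iff.mp (X_pow_dvd_prod_one_sub_X_pow_two_mul_sub h) i (by omega)
  · rw [← neg_sub, map_neg, neg_eq_zero]
    exact X_pow_dvd_iff.mp (X_pow_dvd_prod_one_sub_X_pow_two_mul_sub h) i (by omega)

end PowerSeries

theorem X_pow_dvd_prod_one_sub_X_pow_two_mul_sub_infProdEven (n : ℕ) :
    X ^ (2 * n + 2) ∣ ∏ k ∈ Icc 1 n, (1 - X ^ (2 * k) : ℚ⟦X⟧) - infProdEven := by
  refine X_pow_dvd_iff.mpr fun i hi => ?_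
  rw [map_sub, infProdEven, coeff_mk, sub_eq_zero]
  exact coeff_prod_one_sub_X_pow_two_mul_eq (by omega)

theorem coeff_prod_one_sub_X_pow_two_mul_sub_infProdEven (n : ℕ) :
    coeff (2 * n + 2) (∏ k ∈ Icc 1 n, (1 - X ^ (2 * k) : ℚ⟦X⟧) - infProdEven) = 1 := by
  have hstab := coeff_prod_one_sub_X_pow_two_mul_eq (R := ℚ) (m := n + 1) (m' := 2 * n + 2)
    (i := 2 * n + 2) (by omega)
  rw [map_sub, infProdEven, coeff_mk, ← hstab, prod_one_sub_X_pow_two_mul_succ, map_sub,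
    mul_add_one, coeff_X_pow_mul', if_pos (by omega), Nat.sub_self,
    coeff_zero_eq_constantCoeff_apply, constantCoeff_prod_one_sub_X_pow_two_mul]
  ring

theorem coinvariant_char_poly_range_sharp_general (n : ℕ) (a b : ℕ → ℕ) :
    (∀ i ≤ 2 * n + 1,
      PowerSeries.coeff (R := ℚ) i
        ((∏ k ∈ Finset.Icc 1 n, (1 - (PowerSeries.X : PowerSeries ℚ) ^ (2 * k))) *
          (∏ r ∈ Finset.Icc 1 n,
            (1 - (PowerSeries.X : PowerSeries ℚ) ^ r) ^ (a r) *
              (1 + (PowerSeries.X : PowerSeries ℚ) ^ r) ^ (b r))⁻¹)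
      = PowerSeries.coeff (R := ℚ) i
        (infProdEven *
          (∏ r ∈ Finset.Icc 1 n,
            (1 - (PowerSeries.X : PowerSeries ℚ) ^ r) ^ (a r) *
              (1 + (PowerSeries.X : PowerSeries ℚ) ^ r) ^ (b r))⁻¹))
    ∧
    PowerSeries.coeff (R := ℚ) (2 * n + 2)
      (((∏ k ∈ Finset.Icc 1 n, (1 - (PowerSeries.X : PowerSeries ℚ) ^ (2 * k))) *
          (∏ r ∈ Finset.Icc 1 n,
            (1 - (PowerSeries.X : PowerSeries ℚ) ^ r) ^ (a r) *
              (1 + (PowerSeries.X : PowerSeries ℚ) ^ r) ^ (b r))⁻¹)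
        - (infProdEven *
          (∏ r ∈ Finset.Icc 1 n,
            (1 - (PowerSeries.X : PowerSeries ℚ) ^ r) ^ (a r) *
              (1 + (PowerSeries.X : PowerSeries ℚ) ^ r) ^ (b r))⁻¹))
      = 1 := by
  have hdvd := X_pow_dvd_prod_one_sub_X_pow_two_mul_sub_infProdEven n
  have hD : constantCoeff (∏ r ∈ Icc 1 n,
      (1 - X ^ r : ℚ⟦X⟧) ^ (a r) * (1 + X ^ r : ℚ⟦X⟧) ^ (b r)) = 1 := by
    rw [map_prod]
    refine prod_eq_one fun r hr => ?_
    have hr : r ≠ 0 := by simp at hr; omega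
    simp [zero_pow hr]
  refine ⟨fun i hi => ?_, ?_⟩
  · rw [← sub_eq_zero, ← map_sub, ← sub_mul]
    exact X_pow_dvd_iff.mp (dvd_mul_of_dvd_left hdvd _) i (by omega)
  · rw [← sub_mul, coeff_mul_of_X_pow_dvd hdvd, coeff_prod_one_sub_X_pow_two_mul_sub_infProdEven,
      constantCoeff_inv, hD, inv_one, one_mul]

/-- **Theorem 1.7 and Remark 3.9 (sharpness)**: for a signed cycle type of an element of
`B_n` with `a_r` positive and `b_r` negative `r`-cycles (`Σ r(a_r+b_r) = n`), the series
`A = ∏_{k=1}^n (1-t^{2k}) / ∏_{r=1}^n (1-t^r)^{a_r}(1+t^r)^{b_r}` (the Poincaré-type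
character series of the coinvariant algebra `R_n^*`) and
`Q = ∏_{k=1}^∞ (1-t^{2k}) / ∏_{r=1}^n (1-t^r)^{a_r}(1+t^r)^{b_r}` (the generating series
of the character polynomials `Q_i`) agree in all degrees `i ≤ 2n+1`, and the coefficient
of `t^{2n+2}` in `A - Q` equals `1`; in particular the range `i ≤ 2n+1` is sharp. -/
theorem coinvariant_char_poly_range_sharp (n : ℕ) (hn : 1 ≤ n) (a b : ℕ → ℕ)
    (hab : ∑ r ∈ Finset.Icc 1 n, r * (a r + b r) = n) :
    (∀ i ≤ 2 * n + 1,
      PowerSeries.coeff (R := ℚ) i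
        ((∏ k ∈ Finset.Icc 1 n, (1 - (PowerSeries.X : PowerSeries ℚ) ^ (2 * k))) *
          (∏ r ∈ Finset.Icc 1 n,
            (1 - (PowerSeries.X : PowerSeries ℚ) ^ r) ^ (a r) *
              (1 + (PowerSeries.X : PowerSeries ℚ) ^ r) ^ (b r))⁻¹)
      = PowerSeries.coeff (R := ℚ) i
        (infProdEven *
          (∏ r ∈ Finset.Icc 1 n,
            (1 - (PowerSeries.X : PowerSeries ℚ) ^ r) ^ (a r) *
              (1 + (PowerSeries.X : PowerSeries ℚ) ^ r) ^ (b r))⁻¹))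
    ∧
    PowerSeries.coeff (R := ℚ) (2 * n + 2)
      (((∏ k ∈ Finset.Icc 1 n, (1 - (PowerSeries.X : PowerSeries ℚ) ^ (2 * k))) *
          (∏ r ∈ Finset.Icc 1 n,
            (1 - (PowerSeries.X : PowerSeries ℚ) ^ r) ^ (a r) *
              (1 + (PowerSeries.X : PowerSeries ℚ) ^ r) ^ (b r))⁻¹)
        - (infProdEven *
          (∏ r ∈ Finset.Icc 1 n,
            (1 - (PowerSeries.X : PowerSeries ℚ) ^ r) ^ (a r) *
              (1 + (PowerSeries.X : PowerSeries ℚ) ^ r) ^ (b r))⁻¹))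
      = 1 :=
  coinvariant_char_poly_range_sharp_general n a b
end

section
/- Let q and u be real numbers with q > 1 and |u| < q. Then the series Σ_{i≥1} u^i/(i(q^i - 1)) converges absolutely, the infinite product ∏_{r≥1} (1 - u q^{-r})^{-1} converges, and exp( Σ_{i≥1} u^i/(i(q^i - 1)) ) = ∏_{r≥1} (1 - u q^{-r})^{-1}. -/
/-
Since `|u q^{-r}| ≤ |u|/q < 1`, each factor satisfies
`log (1 - u q^{-r})⁻¹ = Σ_{i≥1} (u q^{-r})^i / i`, and the resulting double series converges
absolutely. Summing it over `r` first instead gives `Σ_{i≥1} u^i / (i (q^i - 1))`, because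
`Σ_{r≥1} (u q^{-r})^i = u^i / (q^i - 1)`; exponentiating turns the sum of logarithms into the
product.
-/

section PowerSums

variable {x : ℕ → ℝ} {c : ℝ}

lemma abs_pow_succ_le_mul (hc : ∀ r, |x r| ≤ c) (n r : ℕ) : |x r ^ (n + 1)| ≤ c ^ n * |x r| := by
  rw [abs_pow, pow_succ]
  exact mul_le_mul_of_nonneg_right (pow_le_pow_left₀ (abs_nonneg _) (hc r) n) (abs_nonneg _)

lemma summable_abs_pow_succ_div (hx : Summable fun r => |x r|) (hc : ∀ r, |x r| ≤ c)
    (hc1 : c < 1) : Summable fun p : ℕ × ℕ => |x p.2 ^ (p.1 + 1) / (p.1 + 1)| := by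
  have hc0 : 0 ≤ c := (abs_nonneg _).trans (hc 0)
  refine .of_nonneg_of_le (fun _ => abs_nonneg _) (fun p => ?_)
    ((summable_geometric_of_lt_one hc0 hc1).mul_of_nonneg hx (fun n => by positivity)
      (fun r => abs_nonneg _))
  rw [abs_div, abs_of_pos (by positivity : (0 : ℝ) < p.1 + 1)]
  exact (div_le_self (abs_nonneg _) (by simp)).trans (abs_pow_succ_le_mul hc p.1 p.2)

lemma summable_abs_tsum_pow_succ_div (hx : Summable fun r => |x r|) (hc : ∀ r, |x r| ≤ c)
    (hc1 : c < 1) : Summable fun n : ℕ => |(∑' r, x r ^ (n + 1)) / (n + 1)| := by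
  have hc0 : 0 ≤ c := (abs_nonneg _).trans (hc 0)
  refine .of_nonneg_of_le (fun _ => abs_nonneg _) (fun n => ?_)
    ((summable_geometric_of_lt_one hc0 hc1).mul_right (∑' r, |x r|))
  have hsum : |∑' r, x r ^ (n + 1)| ≤ c ^ n * ∑' r, |x r| :=
    tsum_of_norm_bounded (f := fun r => x r ^ (n + 1)) (hx.hasSum.mul_left (c ^ n))
      (abs_pow_succ_le_mul hc n)
  rw [abs_div, abs_of_pos (by positivity : (0 : ℝ) < n + 1)]
  exact (div_le_self (abs_nonneg _) (by simp)).trans hsum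

lemma hasProd_inv_one_sub_exp_tsum (hx : Summable fun r => |x r|) (hc : ∀ r, |x r| ≤ c)
    (hc1 : c < 1) :
    HasProd (fun r => (1 - x r)⁻¹) (Real.exp (∑' n : ℕ, (∑' r, x r ^ (n + 1)) / (n + 1))) := by
  set F : ℕ × ℕ → ℝ := fun p => x p.2 ^ (p.1 + 1) / (p.1 + 1)
  have hF : Summable F := (summable_abs_pow_succ_div hx hc hc1).of_abs
  have hlt : ∀ r, |x r| < 1 := fun r => (hc r).trans_lt hc1
  have hrows : HasSum (fun n : ℕ => (∑' r, x r ^ (n + 1)) / (n + 1)) (∑' p, F p) :=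
    hF.hasSum.prod_fiberwise fun n => by
      rw [← tsum_div_const]
      exact (hF.prod_factor n).hasSum
  have hcols : HasSum (fun r => Real.log (1 - x r)⁻¹) (∑' p, F p) := by
    have hswap : ∑' p : ℕ × ℕ, F p.swap = ∑' p, F p := (Equiv.prodComm ℕ ℕ).tsum_eq F
    rw [← hswap]
    simpa only [Real.log_inv] using
      hF.prod_symm.hasSum.prod_fiberwise fun r => Real.hasSum_pow_div_log_of_abs_lt_one (hlt r)
  rw [hrows.tsum_eq]
  refine Real.hasProd_of_hasSum_log (fun r => inv_pos.2 ?_) hcols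
  linarith [(abs_lt.1 (hlt r)).2]

end PowerSums

lemma hasSum_inv_pow_succ {Q : ℝ} (hQ : 1 < Q) :
    HasSum (fun r : ℕ => (Q ^ (r + 1))⁻¹) (Q - 1)⁻¹ := by
  have hQ0 : 0 < Q := zero_lt_one.trans hQ
  have hgeom := (hasSum_geometric_of_lt_one (inv_nonneg.2 hQ0.le)
    (inv_lt_one_of_one_lt₀ hQ)).mul_left Q⁻¹
  rw [show Q⁻¹ * (1 - Q⁻¹)⁻¹ = (Q - 1)⁻¹ by field_simp] at hgeom
  exact hgeom.congr_fun fun r => by rw [inv_pow, pow_succ', mul_inv]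

lemma hasSum_div_pow_succ_pow (u : ℝ) {q : ℝ} (hq : 1 < q) (n : ℕ) :
    HasSum (fun r : ℕ => (u / q ^ (r + 1)) ^ (n + 1)) (u ^ (n + 1) / (q ^ (n + 1) - 1)) := by
  refine ((hasSum_inv_pow_succ (one_lt_pow₀ hq n.succ_ne_zero)).mul_left (u ^ (n + 1))).congr_fun
    fun r => ?_
  rw [div_pow, ← pow_mul, ← pow_mul, mul_comm r.succ, div_eq_mul_inv]

/-- **Lemma 3.3(i)**: for real `q > 1` and `|u| < q`, the series
`Σ_{i≥1} u^i/(i(q^i-1))` converges absolutely, the infinite product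
`∏_{r≥1} (1-u q^{-r})^{-1}` converges, and
`exp(Σ_{i≥1} u^i/(i(q^i-1))) = ∏_{r≥1} (1-u q^{-r})^{-1}`. -/
theorem exp_sum_eq_prod (q u : ℝ) (hq : 1 < q) (hu : |u| < q) :
    Summable (fun i : ℕ => |u ^ (i + 1) / ((i + 1) * (q ^ (i + 1) - 1))|) ∧
    Multipliable (fun r : ℕ => (1 - u / q ^ (r + 1))⁻¹) ∧
    Real.exp (∑' i : ℕ, u ^ (i + 1) / ((i + 1) * (q ^ (i + 1) - 1)))
      = ∏' r : ℕ, (1 - u / q ^ (r + 1))⁻¹ := by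
  have hq0 : 0 < q := zero_lt_one.trans hq
  set x : ℕ → ℝ := fun r => u / q ^ (r + 1)
  have hx : Summable fun r => |x r| := by
    simpa only [x, abs_div, abs_pow, abs_of_pos hq0] using
      (hasSum_div_pow_succ_pow |u| hq 0).summable.congr fun r => by simp
  have hc : ∀ r, |x r| ≤ |u| / q := fun r => by
    rw [abs_div, abs_of_pos (pow_pos hq0 _)]
    exact div_le_div_of_nonneg_left (abs_nonneg u) hq0 (le_self_pow₀ hq.le r.succ_ne_zero)
  have hc1 : |u| / q < 1 := (div_lt_one hq0).2 hu
  have hpow : ∀ n : ℕ, (∑' r, x r ^ (n + 1)) / (n + 1) =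
      u ^ (n + 1) / ((n + 1) * (q ^ (n + 1) - 1)) := fun n => by
    rw [(hasSum_div_pow_succ_pow u hq n).tsum_eq, div_div, mul_comm]
  have hprod := hasProd_inv_one_sub_exp_tsum hx hc hc1
  simp only [hpow] at hprod
  exact ⟨by simpa only [hpow] using summable_abs_tsum_pow_succ_div hx hc hc1,
    hprod.multipliable, hprod.tprod_eq.symm⟩
end
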